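/- Any crash-fault-tolerant consensus algorithm for n ≥ f + 2 processes tolerating f crash failures requires at least f + 1 rounds in some admissible execution. -/

import Mathlib

open scoped Classical

/-- A deterministic synchronous full-information message-passing protocol for
`n` processes.  Each process starts in a state determined by its Boolean
input; in every round each process sends a message to every other process
(computed from its current state) and then updates its state from the
messages it received (`none` encodes a missing message from a crashed
process); at any time it may have decided a Boolean value, read off by
`output`. -/
structure SyncProtocol (n : ℕ) where
  State : Type
  Msg : Type
  init : Fin n → Bool → State
  send : Fin n → State → Fin n → Msg
  step : Fin n → State → (Fin n → Option Msg) → State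
  output : State → Option Bool

/-- A crash-failure pattern: `crash p = some r` means process `p` crashes in
round `r` (rounds are numbered `1, 2, …`); in its crashing round an
adversarially chosen subset of its messages is delivered (`deliv p q` holds
iff `p`'s crashing-round message to `q` is delivered) and it is silent in all
later rounds. -/
structure FailPattern (n : ℕ) where
  crash : Fin n → Option ℕ
  deliv : Fin n → Fin n → Prop

/-- Whether sender `p`'s message to `q` in round `r` is delivered. -/
def FailPattern.ok {n : ℕ} (F : FailPattern n) (p q : Fin n) (r : ℕ) : Prop :=
  match F.crash p with
  | none => True
  | some rc => r < rc ∨ (r = rc ∧ F.deliv p q)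

/-- Process `p` is non-faulty in the pattern `F`. -/
def FailPattern.Nonfaulty {n : ℕ} (F : FailPattern n) (p : Fin n) : Prop :=
  F.crash p = none

/-- The number of processes that crash in the pattern `F`. -/
noncomputable def FailPattern.numFaulty {n : ℕ} (F : FailPattern n) : ℕ :=
  (Finset.univ.filter (fun p => F.crash p ≠ none)).card

/-- The state of process `p` at the end of round `r` in the execution of
protocol `P` with inputs `x` and failure pattern `F`. -/
noncomputable def run {n : ℕ} (P : SyncProtocol n) (x : Fin n → Bool)
    (F : FailPattern n) : ℕ → Fin n → P.State
  | 0, p => P.init p (x p)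
  | r + 1, p =>
      P.step p (run P x F r p)
        (fun q => if F.ok q p (r + 1) then some (P.send q (run P x F r q) p)
                  else none)

/-- Protocol `P` solves consensus for `n` processes tolerating `f` crash
failures within `R` rounds: in every admissible execution (at most `f`
crashes), by the end of round `R` every non-faulty process has decided
(termination), all non-faulty processes decide the same value (agreement),
and any decided value is some process's input (validity). -/
def SolvesConsensus {n : ℕ} (P : SyncProtocol n) (f R : ℕ) : Prop :=
  ∀ (x : Fin n → Bool) (F : FailPattern n), F.numFaulty ≤ f →
    (∀ p, F.Nonfaulty p → ∃ b, P.output (run P x F R p) = some b) ∧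
    (∀ p q bp bq, F.Nonfaulty p → F.Nonfaulty q →
      P.output (run P x F R p) = some bp →
      P.output (run P x F R q) = some bq → bp = bq) ∧
    (∀ p b, F.Nonfaulty p → P.output (run P x F R p) = some b → ∃ q, x q = b)

/-!
Suppose the protocol decides within `R ≤ f` rounds. By downward induction on `j ≤ R`, crashing
one more process `p` silently in round `j`, when every other crash happens by round `j` and fewer
than `j` processes are faulty, does not change the decision. Let `p` deliver its round-`j`
messages to one more recipient `q` at a time: the change is seen only by `q`, and `q` cannot pass
it on, because it is already silent after round `j`, or `j = R`, or it can be crashed silently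
in round `j + 1`, which is harmless by induction. Delivering all round-`j` messages is the same
as crashing silently in round `j + 1` (again harmless), or, for `j = R`, as not crashing at all.
With `j = 1`, the input of a single process can be flipped without changing the decision of the
failure-free execution: crash that process silently in round 1. Hence all-`false` and
all-`true` inputs give the same decision, contradicting validity. The bound `f + 2 ≤ n` provides
a non-faulty process other than `q` that witnesses each step.
-/

namespace FailPattern

variable {n : ℕ}

def failureFree : FailPattern n where
  crash _ := none
  deliv _ _ := False

def crashAt (F : FailPattern n) (p : Fin n) (j : ℕ) (S : Finset (Fin n)) : FailPattern n where
  crash := Function.update F.crash p (some j)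
  deliv a b := if a = p then b ∈ S else F.deliv a b

def CrashesBy (F : FailPattern n) (j : ℕ) : Prop :=
  ∀ a r, F.crash a = some r → r ≤ j

@[simp]
lemma numFaulty_failureFree : (failureFree : FailPattern n).numFaulty = 0 := by
  simp [numFaulty, failureFree]

lemma card_nonfaulty_add_numFaulty (F : FailPattern n) :
    (Finset.univ.filter F.Nonfaulty).card + F.numFaulty = n := by
  have := Finset.card_filter_add_card_filter_not (s := Finset.univ) (p := F.Nonfaulty)
  rw [Finset.card_univ, Fintype.card_fin] at this
  convert this using 2
  simp only [numFaulty, Nonfaulty, ne_eq]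
  congr

lemma exists_nonfaulty (F : FailPattern n) (h : F.numFaulty < n) : ∃ w, F.Nonfaulty w := by
  obtain ⟨w, hw⟩ : (Finset.univ.filter F.Nonfaulty).Nonempty := by
    rw [← Finset.card_pos]; have := F.card_nonfaulty_add_numFaulty; omega
  exact ⟨w, (Finset.mem_filter.1 hw).2⟩

lemma exists_nonfaulty_ne (F : FailPattern n) (h : F.numFaulty + 2 ≤ n) (z : Fin n) :
    ∃ w, w ≠ z ∧ F.Nonfaulty w := by
  obtain ⟨w, hw, hwz⟩ := Finset.exists_mem_ne (s := Finset.univ.filter F.Nonfaulty)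
    (by have := F.card_nonfaulty_add_numFaulty; omega) z
  exact ⟨w, hwz, (Finset.mem_filter.1 hw).2⟩

lemma not_ok_of_crash_lt {F : FailPattern n} {a : Fin n} {c r : ℕ} (h : F.crash a = some c)
    (hr : c < r) (b : Fin n) : ¬ F.ok a b r := by
  simp only [ok, h]
  omega

lemma CrashesBy.mono {F : FailPattern n} {j k : ℕ} (h : F.CrashesBy j) (hjk : j ≤ k) :
    F.CrashesBy k :=
  fun a r ha => (h a r ha).trans hjk

section crashAt

variable (F : FailPattern n) (p : Fin n) (j : ℕ) (S : Finset (Fin n))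

lemma crashAt_crash_self : (F.crashAt p j S).crash p = some j := Function.update_self ..

lemma crashAt_crash_of_ne {a : Fin n} (ha : a ≠ p) : (F.crashAt p j S).crash a = F.crash a :=
  Function.update_of_ne ha ..

lemma nonfaulty_crashAt_iff {a : Fin n} :
    (F.crashAt p j S).Nonfaulty a ↔ a ≠ p ∧ F.Nonfaulty a := by
  by_cases ha : a = p
  · subst ha; simp [Nonfaulty, crashAt_crash_self]
  · simp [Nonfaulty, crashAt_crash_of_ne F p j S ha, ha]

lemma ok_crashAt_self (b : Fin n) (r : ℕ) :
    (F.crashAt p j S).ok p b r ↔ r < j ∨ r = j ∧ b ∈ S := by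
  simp [ok, crashAt]

lemma ok_crashAt_of_ne {a : Fin n} (ha : a ≠ p) (b : Fin n) (r : ℕ) :
    (F.crashAt p j S).ok a b r ↔ F.ok a b r := by
  simp [ok, crashAt, ha]

lemma numFaulty_crashAt_le : (F.crashAt p j S).numFaulty ≤ F.numFaulty + 1 := by
  refine (Finset.card_le_card fun a ha => ?_).trans (Finset.card_insert_le p _)
  by_cases hap : a = p
  · simp [hap]
  · simpa [crashAt_crash_of_ne F p j S hap, hap] using ha

variable {F j} in
lemma CrashesBy.crashAt (h : F.CrashesBy j) : (F.crashAt p j S).CrashesBy j := by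
  intro a r ha
  by_cases hap : a = p
  · subst hap; rw [crashAt_crash_self] at ha; cases ha; rfl
  · exact h a r (by rwa [crashAt_crash_of_ne F p j S hap] at ha)

lemma ok_crashAt_insert_iff {q a b : Fin n} {r : ℕ} (h : b ≠ q ∨ r < j) :
    (F.crashAt p j (insert q S)).ok a b r ↔ (F.crashAt p j S).ok a b r := by
  by_cases hap : a = p
  · subst hap
    simp only [ok_crashAt_self, Finset.mem_insert]
    rcases h with h | h <;> simp [h]
  · simp only [ok_crashAt_of_ne _ _ _ _ hap]

end crashAt

end FailPattern

open FailPattern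

lemma Finset.apply_univ_eq_apply_empty {α β : Type*} [Fintype α] [DecidableEq α]
    (g : Finset α → β) (h : ∀ q S, q ∉ S → g (insert q S) = g S) : g Finset.univ = g ∅ := by
  induction (Finset.univ : Finset α) using Finset.induction_on with
  | empty => rfl
  | insert q S hq ih => rw [h q S hq, ih]

variable {n : ℕ}

-- From round `m` on, the state of `z` may differ between the two executions.
lemma run_eq_of_agree_off (P : SyncProtocol n) {x x' : Fin n → Bool} {F F' : FailPattern n}
    {z : Fin n} {m N : ℕ} (hx : ∀ a, a ≠ z ∨ 0 < m → x a = x' a)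
    (hok : ∀ a b r, r ≤ N → b ≠ z ∨ r < m → (F.ok a b r ↔ F'.ok a b r))
    (hsil : ∀ b r, b ≠ z → m < r → r ≤ N → ¬ F.ok z b r) :
    ∀ r ≤ N, ∀ a, a ≠ z ∨ r < m → run P x F r a = run P x' F' r a := by
  intro r
  induction r with
  | zero => intro _ a ha; simp only [run, hx a ha]
  | succ r ih =>
    intro hr a ha
    have hprev : ∀ b, b ≠ z ∨ r < m → run P x F r b = run P x' F' r b :=
      ih (by omega)
    simp only [run, hprev a (by omega)]
    congr 1
    funext b
    have hiff := hok b a (r + 1) hr (by omega)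
    by_cases hb : b ≠ z ∨ r < m
    · simp only [hiff, hprev b hb]
    · have hsilent : ¬ F.ok b a (r + 1) := by
        obtain rfl : b = z := by tauto
        exact hsil a (r + 1) (by omega) (by omega) hr
      simp [hsilent, hiff.not.1 hsilent]

-- Junk (`false`) unless the non-faulty processes have decided a common value.
noncomputable def decision (P : SyncProtocol n) (R : ℕ) (x : Fin n → Bool)
    (F : FailPattern n) : Bool :=
  decide (∃ p, F.Nonfaulty p ∧ P.output (run P x F R p) = some true)

section consensus

variable {P : SyncProtocol n} {f R : ℕ}

lemma output_run_eq_decision (hP : SolvesConsensus P f R) {x : Fin n → Bool}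
    {F : FailPattern n} (hF : F.numFaulty ≤ f) {p : Fin n} (hp : F.Nonfaulty p) :
    P.output (run P x F R p) = some (decision P R x F) := by
  obtain ⟨b, hb⟩ := (hP x F hF).1 p hp
  cases b with
  | true => rw [hb, decision, decide_eq_true ⟨p, hp, hb⟩]
  | false =>
    rw [hb, decision, decide_eq_false]
    rintro ⟨q, hq, hq'⟩
    exact absurd ((hP x F hF).2.1 p q false true hp hq hb hq') Bool.false_ne_true

lemma decision_eq_of_forall_eq (hP : SolvesConsensus P f R) (hfn : f < n) {x : Fin n → Bool}
    {F : FailPattern n} (hF : F.numFaulty ≤ f) {c : Bool} (hx : ∀ a, x a = c) :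
    decision P R x F = c := by
  obtain ⟨p, hp⟩ := F.exists_nonfaulty (by omega)
  obtain ⟨q, hq⟩ := (hP x F hF).2.2 p _ hp (output_run_eq_decision hP hF hp)
  rw [← hq, hx]

lemma decision_eq_of_agree_off (hP : SolvesConsensus P f R) {x x' : Fin n → Bool}
    {F F' : FailPattern n} (hF : F.numFaulty ≤ f) (hF' : F'.numFaulty ≤ f) {z w : Fin n}
    {m : ℕ} (hw : F.Nonfaulty w) (hw' : F'.Nonfaulty w) (hwz : w ≠ z ∨ R < m)
    (hx : ∀ a, a ≠ z ∨ 0 < m → x a = x' a)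
    (hok : ∀ a b r, r ≤ R → b ≠ z ∨ r < m → (F.ok a b r ↔ F'.ok a b r))
    (hsil : ∀ b r, b ≠ z → m < r → r ≤ R → ¬ F.ok z b r) :
    decision P R x F = decision P R x' F' := by
  have hrun := run_eq_of_agree_off P hx hok hsil R le_rfl w hwz
  apply Option.some_injective
  rw [← output_run_eq_decision hP hF hw, ← output_run_eq_decision hP hF' hw', hrun]

lemma decision_eq_of_ok_iff (hP : SolvesConsensus P f R) {x : Fin n → Bool}
    {F F' : FailPattern n} (hF : F.numFaulty ≤ f) (hF' : F'.numFaulty ≤ f) {w : Fin n}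
    (hw : F.Nonfaulty w) (hw' : F'.Nonfaulty w)
    (hok : ∀ a b r, r ≤ R → (F.ok a b r ↔ F'.ok a b r)) :
    decision P R x F = decision P R x F' :=
  decision_eq_of_agree_off hP hF hF' hw hw' (z := w) (m := R + 1) (.inr (by omega))
    (fun _ _ => rfl) (fun a b r hr _ => hok a b r hr) (fun _ _ _ _ _ => by omega)

variable (P R) in
def SilentCrashIrrelevant (j : ℕ) : Prop :=
  ∀ (x : Fin n → Bool) (F : FailPattern n) (p : Fin n), F.Nonfaulty p → F.CrashesBy j →
    F.numFaulty < j → decision P R x (F.crashAt p j ∅) = decision P R x F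

lemma decision_crashAt_insert (hP : SolvesConsensus P f R) (hn : f + 2 ≤ n) (hRf : R ≤ f)
    {j : ℕ} (hnext : j < R → SilentCrashIrrelevant P R (j + 1)) {x : Fin n → Bool}
    {F : FailPattern n} {p : Fin n} (hby : F.CrashesBy j) (hnum : F.numFaulty < j) (hjR : j ≤ R)
    (q : Fin n) (S : Finset (Fin n)) :
    decision P R x (F.crashAt p j (insert q S)) = decision P R x (F.crashAt p j S) := by
  have hnumS : ∀ T, (F.crashAt p j T).numFaulty ≤ j :=
    fun T => (numFaulty_crashAt_le F p j T).trans (by omega)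
  by_cases hq : j < R ∧ (F.crashAt p j S).Nonfaulty q
  · obtain ⟨hjR', hqS⟩ := hq
    -- The extra round-`j` message to `q` is hidden by crashing `q` silently in round `j + 1`.
    let G : Finset (Fin n) → FailPattern n := fun T => (F.crashAt p j T).crashAt q (j + 1) ∅
    have hirr : ∀ T, decision P R x (G T) = decision P R x (F.crashAt p j T) := fun T =>
      hnext hjR' x _ q hqS ((hby.crashAt p T).mono j.le_succ) (by have := hnumS T; omega)
    have hnumG : ∀ T, (G T).numFaulty ≤ f :=
      fun T => (numFaulty_crashAt_le _ _ _ _).trans (by have := hnumS T; omega)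
    obtain ⟨w, hw⟩ := (G S).exists_nonfaulty (by have := hnumG S; omega)
    rw [← hirr, ← hirr]
    refine decision_eq_of_agree_off hP (hnumG _) (hnumG _) (z := q) (m := j) hw hw
      (.inl ((nonfaulty_crashAt_iff _ _ _ _).1 hw).1) (fun _ _ => rfl) ?_ ?_
    · intro a b r _ hbr
      by_cases haq : a = q
      · subst haq
        simp only [G, ok_crashAt_self]
      · simp only [G, ok_crashAt_of_ne _ _ _ _ haq]
        exact ok_crashAt_insert_iff F p j S hbr
    · intro b r _ hjr _
      simp only [G, ok_crashAt_self, Finset.notMem_empty, and_false, or_false]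
      omega
  · obtain ⟨w, hwq, hw⟩ := (F.crashAt p j S).exists_nonfaulty_ne (by have := hnumS S; omega) q
    refine decision_eq_of_agree_off hP ((hnumS _).trans (by omega)) ((hnumS _).trans (by omega))
      (m := j) hw hw (.inl hwq) (fun _ _ => rfl)
      (fun a b r _ hbr => ok_crashAt_insert_iff F p j S hbr) ?_
    intro b r _ hjr hrR
    obtain ⟨c, hc⟩ := Option.ne_none_iff_exists'.1 fun h => hq ⟨by omega, h⟩
    exact not_ok_of_crash_lt (F := F.crashAt p j (insert q S)) hc
      (by have := hby.crashAt p S q c hc; omega) b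

lemma silentCrashIrrelevant_of_succ (hP : SolvesConsensus P f R) (hn : f + 2 ≤ n)
    (hRf : R ≤ f) {j : ℕ} (hjR : j ≤ R) (hnext : j < R → SilentCrashIrrelevant P R (j + 1)) :
    SilentCrashIrrelevant P R j := by
  intro x F p hp hby hnum
  have hchain := Finset.apply_univ_eq_apply_empty (fun S => decision P R x (F.crashAt p j S))
    fun q S _ => decision_crashAt_insert hP hn hRf hnext hby hnum hjR q S
  refine hchain.symm.trans ?_
  have hnumU : (F.crashAt p j Finset.univ).numFaulty ≤ f :=
    (numFaulty_crashAt_le _ _ _ _).trans (by omega)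
  obtain ⟨w, hw⟩ := (F.crashAt p j Finset.univ).exists_nonfaulty (by omega)
  obtain ⟨hwp, hwF⟩ := (nonfaulty_crashAt_iff _ _ _ _).1 hw
  rcases hjR.lt_or_eq with hjR | rfl
  · calc decision P R x (F.crashAt p j Finset.univ)
        = decision P R x (F.crashAt p (j + 1) ∅) := by
          refine decision_eq_of_ok_iff hP hnumU ((numFaulty_crashAt_le _ _ _ _).trans (by omega))
            hw ((nonfaulty_crashAt_iff _ _ _ _).2 ⟨hwp, hwF⟩) fun a b r _ => ?_
          by_cases hap : a = p
          · subst hap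
            simp only [ok_crashAt_self, Finset.mem_univ, Finset.notMem_empty, and_true, and_false,
              or_false]
            omega
          · simp only [ok_crashAt_of_ne _ _ _ _ hap]
      _ = decision P R x F := hnext hjR x F p hp (hby.mono j.le_succ) (by omega)
  · refine decision_eq_of_ok_iff hP hnumU (by omega) hw hwF fun a b r hr => ?_
    by_cases hap : a = p
    · subst hap
      have hp : F.crash a = none := hp
      rw [ok_crashAt_self]
      simp only [ok, hp, Finset.mem_univ, and_true, iff_true]
      omega
    · simp only [ok_crashAt_of_ne _ _ _ _ hap]

lemma silentCrashIrrelevant (hP : SolvesConsensus P f R) (hn : f + 2 ≤ n) (hRf : R ≤ f)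
    {j : ℕ} (hjR : j ≤ R) : SilentCrashIrrelevant P R j :=
  Nat.decreasingInduction (motive := fun j _ => SilentCrashIrrelevant P R j)
    (fun _ hj h => silentCrashIrrelevant_of_succ hP hn hRf hj.le fun _ => h)
    (silentCrashIrrelevant_of_succ hP hn hRf le_rfl fun h => absurd h (lt_irrefl R)) hjR

lemma decision_failureFree_eq_of_eq_off (hP : SolvesConsensus P f R) (hn : f + 2 ≤ n)
    (hRf : R ≤ f) {x x' : Fin n → Bool} (z : Fin n) (hx : ∀ a, a ≠ z → x a = x' a) :
    decision P R x failureFree = decision P R x' failureFree := by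
  have hx' : ∀ a, a ≠ z ∨ 0 < 0 → x a = x' a := fun a ha => hx a (by simpa using ha)
  rcases Nat.eq_zero_or_pos R with rfl | hR
  · obtain ⟨w, hwz, hw⟩ := (failureFree : FailPattern n).exists_nonfaulty_ne (by simp; omega) z
    exact decision_eq_of_agree_off hP (by simp) (by simp) hw hw (.inl hwz) hx'
      (fun _ _ _ _ _ => Iff.rfl) fun _ _ _ hr hr' => by omega
  · let Fz : FailPattern n := failureFree.crashAt z 1 ∅
    have hirr := silentCrashIrrelevant hP hn hRf hR (j := 1)
    have hFz : Fz.numFaulty ≤ f := (numFaulty_crashAt_le _ _ _ _).trans (by simp; omega)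
    obtain ⟨w, hwz, hw⟩ := Fz.exists_nonfaulty_ne (by omega) z
    rw [← hirr x failureFree z rfl (fun _ _ h => by cases h) (by simp),
      ← hirr x' failureFree z rfl (fun _ _ h => by cases h) (by simp)]
    exact decision_eq_of_agree_off hP hFz hFz hw hw (.inl hwz) hx' (fun _ _ _ _ _ => Iff.rfl)
      fun b r _ hr _ => by
        simp only [ok_crashAt_self, Finset.notMem_empty, and_false, or_false]; omega

end consensus

/-- **Round lower bound for crash-fault consensus.** Any consensus algorithm
for `n ≥ f + 2` processes tolerating `f` crash failures requires at least
`f + 1` rounds in some admissible execution. -/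
theorem consensus_round_lower_bound (n f R : ℕ) (hn : f + 2 ≤ n)
    (P : SyncProtocol n) (hP : SolvesConsensus P f R) : f + 1 ≤ R := by
  by_contra! hR
  have hRf : R ≤ f := by omega
  let inputs : Finset (Fin n) → Fin n → Bool := fun S a => decide (a ∈ S)
  have hconst := Finset.apply_univ_eq_apply_empty
    (fun S => decision P R (inputs S) failureFree) fun q S _ =>
      decision_failureFree_eq_of_eq_off hP hn hRf q fun a ha => by simp [inputs, ha]
  have hnum : (failureFree : FailPattern n).numFaulty ≤ f := by simp
  rw [decision_eq_of_forall_eq hP (by omega) hnum (c := true) (by simp [inputs]),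
    decision_eq_of_forall_eq hP (by omega) hnum (c := false) (by simp [inputs])] at hconst
  exact Bool.noConfusion hconst
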